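/- For the discrimination game constructed from dual-feasible operators: (i) 0 ≤ F_y(η) ≤ 1 for every state η, each Ψ_{b|y} is a subchannel, and ∑_{b=1}^{l+J} Ψ_{b|y} is trace-preserving for every y, so (p, Ψ_{B|Y}) is a well-defined multi-object subchannel game; and (ii) sup_{σ ∈ F, ℕ_{A|X} ∈ 𝔽(l,κ)} P^D_succ(p, Ψ_{B|Y}, σ, ℕ_{A|X}) ≤ α + 1/J. -/

import Mathlib

set_option maxHeartbeats 2000000


open scoped BigOperators ComplexOrder

noncomputable section

namespace MultiObject

abbrev Mat (d : ℕ) := Matrix (Fin d) (Fin d) ℂ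

/-- A quantum state: positive semidefinite with unit trace. -/
def IsState {d : ℕ} (ρ : Mat d) : Prop := ρ.PosSemidef ∧ ρ.trace = 1

/-- A POVM set `M x a` indexed by input `x : Fin κ` and outcome `a : Fin l`. -/
def IsPOVMSet {d l κ : ℕ} (M : Fin κ → Fin l → Mat d) : Prop :=
  (∀ x a, (M x a).PosSemidef) ∧ (∀ x, ∑ a, M x a = 1)

/-- A probability mass function on a finite type. -/
def IsPMF {n : ℕ} (p : Fin n → ℝ) : Prop := (∀ i, 0 ≤ p i) ∧ ∑ i, p i = 1

/-- Simulability of the POVM set `N` by the POVM set `M` via classical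
pre- and post-processing. -/
def Simulable {d l κ m τ : ℕ} (N : Fin τ → Fin m → Mat d)
    (M : Fin κ → Fin l → Mat d) : Prop :=
  ∃ (nz : ℕ) (q : Fin nz → ℝ) (r : Fin τ → Fin nz → Fin κ → ℝ)
    (s : Fin τ → Fin nz → Fin l → Fin m → ℝ),
    IsPMF q ∧ (∀ y z, IsPMF (r y z)) ∧ (∀ y z a, IsPMF (s y z a)) ∧
    ∀ y b, N y b = ∑ z, ∑ x, ∑ a, (q z * r y z x * s y z a b) • M x a

/-- Compatibility (joint measurability) of a POVM set. -/
def Compatible {d l κ : ℕ} (M : Fin κ → Fin l → Mat d) : Prop :=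
  ∃ (nl : ℕ) (G : Fin nl → Mat d) (pc : Fin κ → Fin nl → Fin l → ℝ),
    (∀ i, (G i).PosSemidef) ∧ (∑ i, G i = 1) ∧ (∀ x lam, IsPMF (pc x lam)) ∧
    ∀ x a, M x a = ∑ lam, pc x lam a • G lam

/-- A subchannel: positive and trace-nonincreasing on PSD matrices. -/
def IsSubchannel {d : ℕ} (φ : Mat d →ₗ[ℂ] Mat d) : Prop :=
  (∀ A : Mat d, A.PosSemidef → (φ A).PosSemidef) ∧
  (∀ A : Mat d, A.PosSemidef → ((φ A).trace).re ≤ (A.trace).re)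

/-- An instrument: subchannels summing to a trace-preserving map. -/
def IsInstrument {d m : ℕ} (Φ : Fin m → (Mat d →ₗ[ℂ] Mat d)) : Prop :=
  (∀ b, IsSubchannel (Φ b)) ∧ (∀ A : Mat d, Matrix.trace (∑ b, Φ b A) = Matrix.trace A)

/-- A multi-object subchannel game: a PMF `p` with positive weights and a
family of instruments with common outcome set. -/
def IsGame {d m τ : ℕ} (p : Fin τ → ℝ) (Φ : Fin τ → Fin m → (Mat d →ₗ[ℂ] Mat d)) : Prop :=
  IsPMF p ∧ (∀ y, 0 < p y) ∧ (∀ y, IsInstrument (Φ y))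

/-- The value `∑_{b,y} tr[N_{b|y} φ_{b|y}(ρ)] p(y)`. -/
def gameValue {d m τ : ℕ} (p : Fin τ → ℝ) (Φ : Fin τ → Fin m → (Mat d →ₗ[ℂ] Mat d))
    (ρ : Mat d) (N : Fin τ → Fin m → Mat d) : ℝ :=
  ∑ y, ∑ b, p y * (Matrix.trace (N y b * Φ y b ρ)).re

/-- Success probability for discrimination. -/
def PsuccD {d l κ m τ : ℕ} (p : Fin τ → ℝ) (Φ : Fin τ → Fin m → (Mat d →ₗ[ℂ] Mat d))
    (ρ : Mat d) (M : Fin κ → Fin l → Mat d) : ℝ :=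
  sSup {v : ℝ | ∃ N : Fin τ → Fin m → Mat d, Simulable N M ∧ v = gameValue p Φ ρ N}

/-- Error probability for exclusion. -/
def PerrE {d l κ m τ : ℕ} (p : Fin τ → ℝ) (Φ : Fin τ → Fin m → (Mat d →ₗ[ℂ] Mat d))
    (ρ : Mat d) (M : Fin κ → Fin l → Mat d) : ℝ :=
  sInf {v : ℝ | ∃ N : Fin τ → Fin m → Mat d, Simulable N M ∧ v = gameValue p Φ ρ N}

/-- Free (normalised) states of a cone `𝓕`. -/
def freeStates {d : ℕ} (𝓕 : Set (Mat d)) : Set (Mat d) := {σ ∈ 𝓕 | Matrix.trace σ = 1}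

/-- Feasible set for the generalised robustness of a state. -/
def RFSet {d : ℕ} (F : Set (Mat d)) (ρ : Mat d) : Set ℝ :=
  {r : ℝ | 0 ≤ r ∧ ∃ ρG σ : Mat d, IsState ρG ∧ σ ∈ F ∧ ρ + r • ρG = (1 + r) • σ}

/-- Generalised robustness of a state. -/
def RF {d : ℕ} (F : Set (Mat d)) (ρ : Mat d) : ℝ := sInf (RFSet F ρ)

/-- Feasible set for the weight of resource of a state. -/
def WFSet {d : ℕ} (F : Set (Mat d)) (ρ : Mat d) : Set ℝ :=
  {w : ℝ | 0 ≤ w ∧ w ≤ 1 ∧ ∃ ρG σ : Mat d, IsState ρG ∧ σ ∈ F ∧ ρ = w • ρG + (1 - w) • σ}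

/-- Weight of resource of a state. -/
def WF {d : ℕ} (F : Set (Mat d)) (ρ : Mat d) : ℝ := sInf (WFSet F ρ)

/-- Feasible set for the generalised robustness of a POVM set. -/
def RFMSet {d l κ : ℕ} (𝔽 : Set (Fin κ → Fin l → Mat d))
    (M : Fin κ → Fin l → Mat d) : Set ℝ :=
  {r : ℝ | 0 ≤ r ∧ ∃ G Ff : Fin κ → Fin l → Mat d, IsPOVMSet G ∧ Ff ∈ 𝔽 ∧
     ∀ x a, M x a + r • G x a = (1 + r) • Ff x a}

/-- Generalised robustness of a POVM set. -/
def RFM {d l κ : ℕ} (𝔽 : Set (Fin κ → Fin l → Mat d)) (M : Fin κ → Fin l → Mat d) : ℝ :=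
  sInf (RFMSet 𝔽 M)

/-- Feasible set for the weight of resource of a POVM set. -/
def WFMSet {d l κ : ℕ} (𝔽 : Set (Fin κ → Fin l → Mat d))
    (M : Fin κ → Fin l → Mat d) : Set ℝ :=
  {w : ℝ | 0 ≤ w ∧ w ≤ 1 ∧ ∃ G Ff : Fin κ → Fin l → Mat d, IsPOVMSet G ∧ Ff ∈ 𝔽 ∧
     ∀ x a, M x a = w • G x a + (1 - w) • Ff x a}

/-- Weight of resource of a POVM set. -/
def WFM {d l κ : ℕ} (𝔽 : Set (Fin κ → Fin l → Mat d)) (M : Fin κ → Fin l → Mat d) : ℝ :=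
  sInf (WFMSet 𝔽 M)

/-- Conic hull of a set in a real module. -/
def conicHull {α : Type*} [AddCommMonoid α] [Module ℝ α] (S : Set α) : Set α :=
  {A | ∃ (n : ℕ) (c : Fin n → ℝ) (f : Fin n → α),
    (∀ i, 0 ≤ c i) ∧ (∀ i, f i ∈ S) ∧ A = ∑ i, c i • f i}

/-- `𝓕` is a closed convex cone of PSD matrices with at least one free state. -/
def IsFreeStateCone {d : ℕ} (𝓕 : Set (Mat d)) : Prop :=
  (∀ A ∈ 𝓕, Matrix.PosSemidef A) ∧
  (∀ A ∈ 𝓕, ∀ c : ℝ, 0 ≤ c → c • A ∈ 𝓕) ∧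
  (∀ A ∈ 𝓕, ∀ B ∈ 𝓕, A + B ∈ 𝓕) ∧
  IsClosed 𝓕 ∧ (freeStates 𝓕).Nonempty

/-- `𝔽` is a set of POVM sets whose conic hull is closed. -/
def GoodPOVMFree {d l κ : ℕ} (𝔽 : Set (Fin κ → Fin l → Mat d)) : Prop :=
  (∀ M ∈ 𝔽, IsPOVMSet M) ∧ IsClosed (conicHull 𝔽)

/-- The collection `𝔽` of free POVM sets is closed under simulability. -/
def ClosedUnderSim {d : ℕ} (𝔽 : ∀ l κ : ℕ, Set (Fin κ → Fin l → Mat d)) : Prop :=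
  ∀ {l κ m τ : ℕ} (M : Fin κ → Fin l → Mat d) (N : Fin τ → Fin m → Mat d),
    M ∈ 𝔽 l κ → Simulable N M → N ∈ 𝔽 m τ

/-- Best fully free success probability. -/
def Dbest {d l κ m τ : ℕ} (p : Fin τ → ℝ) (Φ : Fin τ → Fin m → (Mat d →ₗ[ℂ] Mat d))
    (F : Set (Mat d)) (𝔽 : Set (Fin κ → Fin l → Mat d)) : ℝ :=
  sSup {v : ℝ | ∃ (σ : Mat d) (N : Fin κ → Fin l → Mat d),
    σ ∈ F ∧ N ∈ 𝔽 ∧ v = PsuccD p Φ σ N}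

/-- Best fully free error probability. -/
def Ebest {d l κ m τ : ℕ} (p : Fin τ → ℝ) (Φ : Fin τ → Fin m → (Mat d →ₗ[ℂ] Mat d))
    (F : Set (Mat d)) (𝔽 : Set (Fin κ → Fin l → Mat d)) : ℝ :=
  sInf {v : ℝ | ∃ (σ : Mat d) (N : Fin κ → Fin l → Mat d),
    σ ∈ F ∧ N ∈ 𝔽 ∧ v = PerrE p Φ σ N}

/-- Operator norm of a PSD matrix via the variational characterisation
`‖Z‖_op = sup_{η state} tr[Z η]`. -/
def opNormPSD {d : ℕ} (Z : Mat d) : ℝ :=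
  sSup {v : ℝ | ∃ η : Mat d, IsState η ∧ v = (Matrix.trace (Z * η)).re}

/-- The linear map `η ↦ tr[Z η] • χ`. -/
def funMap {d : ℕ} (Z χ : Mat d) : Mat d →ₗ[ℂ] Mat d where
  toFun η := Matrix.trace (Z * η) • χ
  map_add' η₁ η₂ := by
    simp [Matrix.mul_add, add_smul]
  map_smul' c η := by
    simp [Matrix.mul_smul, smul_smul]

/-- The coefficient `α = 1/(‖Z^ρ‖_op ∑_{a,x} tr[Z_{a|x}] p(x)⁻¹)`. -/
def alphaConst {d l κ : ℕ} (Zr : Mat d) (Zm : Fin κ → Fin l → Mat d)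
    (p : Fin κ → ℝ) : ℝ :=
  (opNormPSD Zr * ∑ x, ∑ a, (Matrix.trace (Zm x a)).re / p x)⁻¹

/-- The function `F_y(η) = α tr[Z^ρ η] ∑_a tr[Z_{a|y}] p(y)⁻¹`. -/
def FyD {d l κ : ℕ} (Zr : Mat d) (Zm : Fin κ → Fin l → Mat d) (p : Fin κ → ℝ)
    (y : Fin κ) (η : Mat d) : ℝ :=
  alphaConst Zr Zm p * (Matrix.trace (Zr * η)).re * (∑ a, (Matrix.trace (Zm y a)).re) / p y

/-- The discrimination game built from dual-feasible operators. -/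
def discPsi {d l κ : ℕ} (Zr : Mat d) (Zm : Fin κ → Fin l → Mat d) (p : Fin κ → ℝ)
    (J : ℕ) (χ : Mat d) : Fin κ → Fin (l + J) → (Mat d →ₗ[ℂ] Mat d) :=
  fun y b =>
    if h : (b : ℕ) < l then
      (((alphaConst Zr Zm p) / p y : ℝ) : ℂ) • funMap Zr (Zm y ⟨b, h⟩)
    else
      ((J : ℂ))⁻¹ • (funMap 1 χ -
        (((alphaConst Zr Zm p) * (∑ a, (Matrix.trace (Zm y a)).re) / p y : ℝ) : ℂ) •
          funMap Zr χ)

/-- The coefficient `β = 1/(2‖Y^ρ‖_op ∑_{a,x} tr[Y_{a|x}] p(x)⁻¹)`. -/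
def betaConst {d l κ : ℕ} (Yr : Mat d) (Ym : Fin κ → Fin l → Mat d)
    (p : Fin κ → ℝ) : ℝ :=
  (2 * opNormPSD Yr * ∑ x, ∑ a, (Matrix.trace (Ym x a)).re / p x)⁻¹

/-- The function `G_y(η) = β tr[Y^ρ η] ∑_a tr[Y_{a|y}] p(y)⁻¹`. -/
def GyE {d l κ : ℕ} (Yr : Mat d) (Ym : Fin κ → Fin l → Mat d) (p : Fin κ → ℝ)
    (y : Fin κ) (η : Mat d) : ℝ :=
  betaConst Yr Ym p * (Matrix.trace (Yr * η)).re * (∑ a, (Matrix.trace (Ym y a)).re) / p y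

/-- The state `ξ_y = (∑_b p(b|y) Y_{b|y}) / (∑_b p(b|y) tr[Y_{b|y}])`. -/
def xiE {d l κ : ℕ} (Ym : Fin κ → Fin l → Mat d) (pc : Fin κ → Fin l → ℝ)
    (y : Fin κ) : Mat d :=
  ((∑ b, pc y b * (Matrix.trace (Ym y b)).re)⁻¹ : ℝ) • ∑ b, pc y b • Ym y b

/-- The exclusion game built from dual-feasible operators. -/
def exclPsi {d l κ : ℕ} (Yr : Mat d) (Ym : Fin κ → Fin l → Mat d) (p : Fin κ → ℝ)
    (pc : Fin κ → Fin l → ℝ) : Fin κ → Fin (l + 1) → (Mat d →ₗ[ℂ] Mat d) :=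
  fun y b =>
    if h : (b : ℕ) < l then
      ((betaConst Yr Ym p / p y : ℝ) : ℂ) • funMap Yr (Ym y ⟨b, h⟩)
    else
      funMap 1 (xiE Ym pc y) -
        ((betaConst Yr Ym p * (∑ a, (Matrix.trace (Ym y a)).re) / p y : ℝ) : ℂ) •
          funMap Yr (xiE Ym pc y)


open scoped Matrix

namespace Aux

lemma diag_nonneg {d : ℕ} {M : Mat d} (hM : M.PosSemidef) (i : Fin d) : 0 ≤ M i i := by
  exact hM.diag_nonneg

lemma trace_nonneg {d : ℕ} {M : Mat d} (hM : M.PosSemidef) : 0 ≤ Matrix.trace M :=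
  Finset.sum_nonneg fun i _ => diag_nonneg hM i

lemma real_of_nonneg {z : ℂ} (h : 0 ≤ z) : z = ((z.re : ℝ) : ℂ) ∧ 0 ≤ z.re := by
  rw [Complex.nonneg_iff] at h
  exact ⟨Complex.ext rfl (by simpa using h.2.symm), h.1⟩

lemma trace_real {d : ℕ} {M : Mat d} (hM : M.PosSemidef) :
    Matrix.trace M = ((Matrix.trace M).re : ℂ) ∧ 0 ≤ (Matrix.trace M).re :=
  real_of_nonneg (trace_nonneg hM)

open scoped MatrixOrder Matrix.Norms.L2Operator in
lemma exists_factor {d : ℕ} {A : Mat d} (hA : A.PosSemidef) : ∃ C : Mat d, A = Cᴴ * C := by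
  obtain ⟨B, hB⟩ := CStarAlgebra.nonneg_iff_eq_star_mul_self.mp hA.nonneg
  exact ⟨B, hB⟩

lemma quad_le_trace {d : ℕ} {A : Mat d} (hA : A.PosSemidef) (x : Fin d → ℂ) :
    (dotProduct (star x) (A *ᵥ x)).re ≤ (Matrix.trace A).re * (∑ j, Complex.normSq (x j)) := by
  obtain ⟨C, hAe⟩ := exists_factor hA
  have h1 : dotProduct (star x) (A *ᵥ x)
      = dotProduct (star (C *ᵥ x)) (C *ᵥ x) := by
    rw [hAe, ← Matrix.mulVec_mulVec, Matrix.dotProduct_mulVec, Matrix.vecMul_conjTranspose,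
      star_star]
  rw [h1]
  have h2 : (dotProduct (star (C *ᵥ x)) (C *ᵥ x)).re
      = ∑ i, Complex.normSq ((C *ᵥ x) i) := by
    simp [dotProduct, Complex.re_sum, Complex.normSq_apply]
  have h3 : (Matrix.trace A).re = ∑ i, ∑ j, Complex.normSq (C i j) := by
    rw [hAe]
    simp only [Matrix.trace, Matrix.diag_apply, Matrix.mul_apply, Matrix.conjTranspose_apply,
      Complex.re_sum, Finset.sum_apply]
    rw [Finset.sum_comm]
    refine Finset.sum_congr rfl fun i _ => Finset.sum_congr rfl fun j _ => ?_
    simp [Complex.normSq_apply, Complex.mul_re]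
  rw [h2, h3, Finset.sum_mul]
  refine Finset.sum_le_sum fun i _ => ?_
  have h4 : ‖(C *ᵥ x) i‖ ≤ ∑ j, ‖C i j‖ * ‖x j‖ := by
    simpa [Matrix.mulVec, dotProduct, norm_mul] using
      (norm_sum_le Finset.univ (fun j => C i j * x j))
  have h5 := Finset.sum_mul_sq_le_sq_mul_sq Finset.univ (fun j => ‖C i j‖)
      (fun j => ‖x j‖)
  have h6 : Complex.normSq ((C *ᵥ x) i) ≤ (∑ j, ‖C i j‖ * ‖x j‖)^2 := by
    rw [← Complex.sq_norm]
    exact pow_le_pow_left₀ (norm_nonneg _) h4 2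
  refine h6.trans (h5.trans_eq ?_)
  simp [Complex.sq_norm]

/-- (tr A) • 1 - A is PSD. -/
lemma smul_one_sub_psd {d : ℕ} {A : Mat d} (hA : A.PosSemidef) :
    (Matrix.trace A • (1 : Mat d) - A).PosSemidef := by
  have htr := real_of_nonneg (trace_nonneg hA)
  refine Matrix.PosSemidef.of_dotProduct_mulVec_nonneg ?_ ?_
  · have h1 : (Matrix.trace A • (1 : Mat d)).IsHermitian := by
      unfold Matrix.IsHermitian
      rw [Matrix.conjTranspose_smul, Matrix.conjTranspose_one, htr.1]
      simp
    exact h1.sub hA.isHermitian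
  · intro x
    have h2 : dotProduct (star x) ((Matrix.trace A • (1 : Mat d) - A) *ᵥ x)
        = Matrix.trace A * (∑ j, (Complex.normSq (x j) : ℂ)) - dotProduct (star x) (A *ᵥ x) := by
      rw [Matrix.sub_mulVec, dotProduct_sub, Matrix.smul_mulVec, Matrix.one_mulVec,
        dotProduct_smul]
      congr 1
      simp [dotProduct, Complex.normSq_eq_conj_mul_self, smul_eq_mul]
    rw [Complex.nonneg_iff] at *
    have hq := hA.dotProduct_mulVec_nonneg x
    rw [Complex.nonneg_iff] at hq
    have hs : (∑ j, (Complex.normSq (x j) : ℂ)) = ((∑ j, Complex.normSq (x j) : ℝ) : ℂ) := by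
      push_cast; ring
    constructor
    · rw [h2, hs, htr.1]
      rw [Complex.sub_re, ← Complex.ofReal_mul, Complex.ofReal_re]
      have := quad_le_trace hA x
      linarith
    · rw [h2, hs, htr.1]
      rw [Complex.sub_im, ← Complex.ofReal_mul, Complex.ofReal_im]
      simpa using hq.2.symm

lemma trace_mul_psd_nonneg {d : ℕ} {A B : Mat d} (hA : A.PosSemidef) (hB : B.PosSemidef) :
    0 ≤ Matrix.trace (A * B) := by
  obtain ⟨C, hC⟩ := exists_factor hA
  rw [hC, Matrix.mul_assoc, Matrix.trace_mul_comm, Matrix.mul_assoc]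
  have hps : (C * B * Cᴴ).PosSemidef := hB.mul_mul_conjTranspose_same C
  rw [Matrix.mul_assoc] at hps
  exact trace_nonneg hps

lemma trace_mul_real {d : ℕ} {A B : Mat d} (hA : A.PosSemidef) (hB : B.PosSemidef) :
    Matrix.trace (A * B) = (((Matrix.trace (A * B)).re : ℝ) : ℂ) ∧ 0 ≤ (Matrix.trace (A * B)).re :=
  real_of_nonneg (trace_mul_psd_nonneg hA hB)

/-- smul of PSD by nonneg real coerced to ℂ. -/
lemma psd_smul {d : ℕ} {A : Mat d} (hA : A.PosSemidef) {c : ℝ} (hc : 0 ≤ c) :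
    (((c : ℂ)) • A).PosSemidef := by
  refine Matrix.PosSemidef.of_dotProduct_mulVec_nonneg ?_ ?_
  · unfold Matrix.IsHermitian
    rw [Matrix.conjTranspose_smul, hA.isHermitian.eq]
    simp
  · intro x
    rw [Matrix.smul_mulVec, dotProduct_smul, smul_eq_mul]
    exact mul_nonneg (by exact_mod_cast Complex.zero_le_real.mpr hc) (hA.dotProduct_mulVec_nonneg x)

lemma real_smul_eq {d : ℕ} (c : ℝ) (A : Mat d) : c • A = ((c : ℂ)) • A := by
  ext i j
  simp [Complex.real_smul]

lemma psd_real_smul {d : ℕ} {A : Mat d} (hA : A.PosSemidef) {c : ℝ} (hc : 0 ≤ c) :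
    (c • A).PosSemidef := by
  rw [real_smul_eq]; exact psd_smul hA hc

/-- tr(A*B).re ≤ tr(A).re * tr(B).re for PSD A,B. -/
lemma trace_mul_le_psd {d : ℕ} {A B : Mat d} (hA : A.PosSemidef) (hB : B.PosSemidef) :
    (Matrix.trace (A * B)).re ≤ (Matrix.trace A).re * (Matrix.trace B).re := by
  have h0 := trace_mul_psd_nonneg (smul_one_sub_psd hA) hB
  have hexp : (Matrix.trace A • (1 : Mat d) - A) * B = Matrix.trace A • B - A * B := by
    rw [Matrix.sub_mul, Matrix.smul_mul, Matrix.one_mul]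
  rw [hexp] at h0
  have htrA := trace_real hA
  have htrB := trace_real hB
  have h1 : Matrix.trace (Matrix.trace A • B - A * B)
      = Matrix.trace A * Matrix.trace B - Matrix.trace (A * B) := by
    rw [Matrix.trace_sub, Matrix.trace_smul, smul_eq_mul]
  rw [h1, Complex.nonneg_iff] at h0
  have h2 : (Matrix.trace A * Matrix.trace B).re = (Matrix.trace A).re * (Matrix.trace B).re := by
    rw [htrA.1, htrB.1, ← Complex.ofReal_mul]
    simp
  have := h0.1
  rw [Complex.sub_re, h2] at this
  linarith

/-- Frobenius: the trace of `Aᴴ * A`. -/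
lemma trace_conj_mul_self_re {d : ℕ} (A : Mat d) :
    (Matrix.trace (Aᴴ * A)).re = ∑ i, ∑ j, Complex.normSq (A j i) := by
  simp only [Matrix.trace, Matrix.diag_apply, Matrix.mul_apply, Matrix.conjTranspose_apply,
    Complex.re_sum, Finset.sum_apply]
  refine Finset.sum_congr rfl fun i _ => Finset.sum_congr rfl fun j _ => ?_
  simp [Complex.normSq_apply, Complex.mul_re]

lemma trace_pos_of_ne {d : ℕ} {A : Mat d} (hA : A.PosSemidef) (hne : A ≠ 0) :
    0 < (Matrix.trace A).re := by
  rcases (trace_real hA).2.lt_or_eq with h | h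
  · exact h
  -- trace = 0 ⇒ A = 0
  exfalso
  apply hne
  obtain ⟨C, hAe⟩ := exists_factor hA
  have hz : ∑ i, ∑ j, Complex.normSq (C j i) = 0 := by
    rw [← trace_conj_mul_self_re, ← hAe, ← h]
  have hC0 : C = 0 := by
    ext i j
    have h1 : ∀ i ∈ Finset.univ, ∀ j ∈ (Finset.univ : Finset (Fin d)), Complex.normSq (C j i) = 0 := by
      have := (Finset.sum_eq_zero_iff_of_nonneg (fun i _ => Finset.sum_nonneg
        (fun j _ => Complex.normSq_nonneg _))).mp hz
      intro i hi j hj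
      exact (Finset.sum_eq_zero_iff_of_nonneg (fun j _ => Complex.normSq_nonneg _)).mp
        (this i hi) j hj
    simpa using Complex.normSq_eq_zero.mp (h1 j (Finset.mem_univ _) i (Finset.mem_univ _))
  rw [hAe, hC0]
  simp

end Aux


lemma opNorm_bddAbove {d : ℕ} {Zr : Mat d} (hZr : Zr.PosSemidef) :
    BddAbove {v : ℝ | ∃ η : Mat d, IsState η ∧ v = (Matrix.trace (Zr * η)).re} := by
  refine ⟨(Matrix.trace Zr).re, ?_⟩
  rintro v ⟨η, hη, rfl⟩
  have h := Aux.trace_mul_le_psd hZr hη.1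
  have ht : (Matrix.trace η).re = 1 := by rw [hη.2]; simp
  rw [ht, mul_one] at h; exact h

lemma le_opNorm_state {d : ℕ} {Zr : Mat d} (hZr : Zr.PosSemidef) {η : Mat d} (hη : IsState η) :
    (Matrix.trace (Zr * η)).re ≤ opNormPSD Zr :=
  le_csSup (opNorm_bddAbove hZr) ⟨η, hη, rfl⟩

lemma le_opNorm_psd {d : ℕ} {Zr : Mat d} (hZr : Zr.PosSemidef) {η : Mat d} (hη : η.PosSemidef) :
    (Matrix.trace (Zr * η)).re ≤ opNormPSD Zr * (Matrix.trace η).re := by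
  by_cases h0 : η = 0
  · simp [h0]
  · have ht : 0 < (Matrix.trace η).re := Aux.trace_pos_of_ne hη h0
    set t := (Matrix.trace η).re with htdef
    have hst : IsState ((((t⁻¹ : ℝ) : ℂ)) • η) := by
      refine ⟨Aux.psd_smul hη (inv_nonneg.mpr ht.le), ?_⟩
      rw [Matrix.trace_smul, smul_eq_mul, (Aux.trace_real hη).1, ← htdef, ← Complex.ofReal_mul,
        inv_mul_cancel₀ ht.ne']
      simp
    have hle := le_opNorm_state hZr hst
    have he : (Matrix.trace (Zr * ((((t⁻¹ : ℝ) : ℂ)) • η))).re = t⁻¹ * (Matrix.trace (Zr * η)).re := by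
      rw [Matrix.mul_smul, Matrix.trace_smul, smul_eq_mul]
      simp [Complex.mul_re]
    rw [he] at hle
    have := mul_le_mul_of_nonneg_left hle ht.le
    rw [← mul_assoc, mul_inv_cancel₀ ht.ne', one_mul] at this
    linarith [this]

lemma opNorm_pos {d : ℕ} {Zr : Mat d} (hZr : Zr.PosSemidef) (hne : Zr ≠ 0) :
    0 < opNormPSD Zr := by
  have ht := Aux.trace_pos_of_ne hZr hne
  have hsq : 0 < (Matrix.trace (Zr * Zr)).re := by
    have he : Matrix.trace (Zr * Zr) = Matrix.trace (Zrᴴ * Zr) := by rw [hZr.isHermitian.eq]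
    rw [he, Aux.trace_conj_mul_self_re]
    have hex : ∃ i j, Zr i j ≠ 0 := by
      by_contra h
      push_neg at h
      exact hne (by ext i j; simpa using h i j)
    obtain ⟨i, j, hij⟩ := hex
    refine Finset.sum_pos' (fun a _ => Finset.sum_nonneg fun b _ => Complex.normSq_nonneg _) ?_
    refine ⟨j, Finset.mem_univ _, Finset.sum_pos' (fun b _ => Complex.normSq_nonneg _)
      ⟨i, Finset.mem_univ _, ?_⟩⟩
    exact Complex.normSq_pos.mpr hij
  set t := (Matrix.trace Zr).re with htdef
  have hst : IsState ((((t⁻¹ : ℝ) : ℂ)) • Zr) := by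
    refine ⟨Aux.psd_smul hZr (inv_nonneg.mpr ht.le), ?_⟩
    rw [Matrix.trace_smul, smul_eq_mul, (Aux.trace_real hZr).1, ← htdef, ← Complex.ofReal_mul,
      inv_mul_cancel₀ ht.ne']
    simp
  have hle := le_opNorm_state hZr hst
  have he : (Matrix.trace (Zr * ((((t⁻¹ : ℝ) : ℂ)) • Zr))).re = t⁻¹ * (Matrix.trace (Zr * Zr)).re := by
    rw [Matrix.mul_smul, Matrix.trace_smul, smul_eq_mul]
    simp [Complex.mul_re]
  rw [he] at hle
  exact lt_of_lt_of_le (mul_pos (inv_pos.mpr ht) hsq) hle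

lemma psd_sum {d : ℕ} {ι : Type*} (s : Finset ι) (f : ι → Mat d)
    (h : ∀ i ∈ s, (f i).PosSemidef) : (∑ i ∈ s, f i).PosSemidef :=
  Finset.sum_induction f _ (fun _ _ ha hb => ha.add hb) Matrix.PosSemidef.zero h

/-- the constructed discrimination game is a well-defined multi-object
subchannel game, and every fully free pair obeys the bound `α + 1/J`. -/
theorem disc_game_wellposed_and_free_bound {d l κ : ℕ} (hd : 1 ≤ d)
    (𝓕 : Set (Mat d)) (h𝓕 : IsFreeStateCone 𝓕)
    (𝔽 : ∀ l κ : ℕ, Set (Fin κ → Fin l → Mat d))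
    (h𝔽 : ∀ l κ : ℕ, GoodPOVMFree (𝔽 l κ))
    (h𝔽sim : ClosedUnderSim 𝔽) (h𝔽ne : (𝔽 l κ).Nonempty)
    (Zr : Mat d) (hZr : Zr.PosSemidef) (hZrne : Zr ≠ 0)
    (hZrF : ∀ σ ∈ freeStates 𝓕, (Matrix.trace (Zr * σ)).re ≤ 1)
    (Zm : Fin κ → Fin l → Mat d) (hZm : ∀ x a, (Zm x a).PosSemidef)
    (hZmne : Zm ≠ 0)
    (hZmF : ∀ N ∈ 𝔽 l κ, (∑ x, ∑ a, (Matrix.trace (Zm x a * N x a)).re) ≤ 1)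
    (p : Fin κ → ℝ) (hp : IsPMF p) (hppos : ∀ x, 0 < p x)
    (J : ℕ) (hJ : 1 ≤ J) (χ : Mat d) (hχ : IsState χ) :
    ((∀ η : Mat d, IsState η → ∀ y, 0 ≤ FyD Zr Zm p y η ∧ FyD Zr Zm p y η ≤ 1) ∧
      (∀ y b, IsSubchannel (discPsi Zr Zm p J χ y b)) ∧
      (∀ y, IsInstrument (discPsi Zr Zm p J χ y)) ∧
      IsGame p (discPsi Zr Zm p J χ)) ∧
    Dbest p (discPsi Zr Zm p J χ) (freeStates 𝓕) (𝔽 l κ) ≤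
      alphaConst Zr Zm p + 1 / (J : ℝ) := by
  classical
  have hal_eq : alphaConst Zr Zm p
      = (opNormPSD Zr * ∑ x, ∑ a, (Matrix.trace (Zm x a)).re / p x)⁻¹ := rfl
  set opN := opNormPSD Zr with hopN
  set S : ℝ := ∑ x, ∑ a, (Matrix.trace (Zm x a)).re / p x with hSdef
  set al := alphaConst Zr Zm p with hal
  have hκ : 0 < κ := by
    rcases Nat.eq_zero_or_pos κ with h | h
    · exfalso; subst h
      have := hp.2
      simp at this
    · exact h
  have hl : 0 < l := by
    rcases Nat.eq_zero_or_pos l with h | h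
    · exfalso; subst h
      exact hZmne (funext fun x => funext fun a => a.elim0)
    · exact h
  have hZmtr : ∀ x a, 0 ≤ (Matrix.trace (Zm x a)).re := fun x a => (Aux.trace_real (hZm x a)).2
  have hopN_pos : 0 < opN := opNorm_pos hZr hZrne
  have hS_pos : 0 < S := by
    have hex : ∃ x a, Zm x a ≠ 0 := by
      by_contra h
      push_neg at h
      exact hZmne (funext fun x => funext fun a => h x a)
    obtain ⟨x0, a0, hx0⟩ := hex
    rw [hSdef]
    refine Finset.sum_pos' (fun x _ => Finset.sum_nonneg fun a _ =>
      div_nonneg (hZmtr x a) (hppos x).le) ⟨x0, Finset.mem_univ _, ?_⟩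
    refine Finset.sum_pos' (fun a _ => div_nonneg (hZmtr x0 a) (hppos x0).le)
      ⟨a0, Finset.mem_univ _, div_pos (Aux.trace_pos_of_ne (hZm x0 a0) hx0) (hppos x0)⟩
  have hal_eq2 : al = (opN * S)⁻¹ := hal_eq
  have hal_pos : 0 < al := by rw [hal_eq2]; positivity
  have halmul : al * (opN * S) = 1 := by
    rw [hal_eq2]; exact inv_mul_cancel₀ (by positivity)
  have hSy_nn : ∀ y, 0 ≤ ∑ a, (Matrix.trace (Zm y a)).re :=
    fun y => Finset.sum_nonneg fun a _ => hZmtr y a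
  have hSy_le : ∀ y, (∑ a, (Matrix.trace (Zm y a)).re) / p y ≤ S := by
    intro y
    rw [hSdef]
    have h1 : (∑ a, (Matrix.trace (Zm y a)).re) / p y
        = ∑ a, (Matrix.trace (Zm y a)).re / p y := Finset.sum_div _ _ _
    rw [h1]
    exact Finset.single_le_sum (f := fun x => ∑ a, (Matrix.trace (Zm x a)).re / p x)
      (fun x _ => Finset.sum_nonneg fun a _ => div_nonneg (hZmtr x a) (hppos x).le)
      (Finset.mem_univ y)
  have hkey : ∀ y, al * ((∑ a, (Matrix.trace (Zm y a)).re) / p y) * opN ≤ 1 := by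
    intro y
    have h2 : al * ((∑ a, (Matrix.trace (Zm y a)).re) / p y) ≤ al * S :=
      mul_le_mul_of_nonneg_left (hSy_le y) hal_pos.le
    have h3 := mul_le_mul_of_nonneg_right h2 hopN_pos.le
    calc al * ((∑ a, (Matrix.trace (Zm y a)).re) / p y) * opN ≤ al * S * opN := h3
      _ = al * (opN * S) := by ring
      _ = 1 := halmul
  have hZrtr : ∀ {η : Mat d}, η.PosSemidef →
      (Matrix.trace (Zr * η)).re ≤ opN * (Matrix.trace η).re := fun hη => le_opNorm_psd hZr hη
  -- scalar nonneg fact used twice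
  have hscal : ∀ {A : Mat d}, A.PosSemidef → ∀ y : Fin κ,
      0 ≤ (Matrix.trace A).re
        - al * (∑ a, (Matrix.trace (Zm y a)).re) / p y * (Matrix.trace (Zr * A)).re := by
    intro A hA y
    have hx := hZrtr hA
    have hx0 := (Aux.trace_mul_real hZr hA).2
    have htA := (Aux.trace_real hA).2
    have hcoef : 0 ≤ al * (∑ a, (Matrix.trace (Zm y a)).re) / p y :=
      div_nonneg (mul_nonneg hal_pos.le (hSy_nn y)) (hppos y).le
    have h1 : al * (∑ a, (Matrix.trace (Zm y a)).re) / p y * (Matrix.trace (Zr * A)).re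
        ≤ al * (∑ a, (Matrix.trace (Zm y a)).re) / p y * (opN * (Matrix.trace A).re) :=
      mul_le_mul_of_nonneg_left hx hcoef
    have h2 : al * (∑ a, (Matrix.trace (Zm y a)).re) / p y * (opN * (Matrix.trace A).re)
        = (al * ((∑ a, (Matrix.trace (Zm y a)).re) / p y) * opN) * (Matrix.trace A).re := by ring
    have h3 := mul_le_mul_of_nonneg_right (hkey y) htA
    rw [one_mul] at h3
    linarith
  -- FyD bounds
  have hFy : ∀ η : Mat d, IsState η → ∀ y, 0 ≤ FyD Zr Zm p y η ∧ FyD Zr Zm p y η ≤ 1 := by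
    intro η hη y
    have hc0 := (Aux.trace_mul_real hZr hη.1).2
    have hc1 : (Matrix.trace (Zr * η)).re ≤ opN := le_opNorm_state hZr hη
    constructor
    · unfold FyD
      rw [← hal]
      exact div_nonneg (mul_nonneg (mul_nonneg hal_pos.le hc0) (hSy_nn y)) (hppos y).le
    · unfold FyD
      rw [← hal]
      have e1 : al * (Matrix.trace (Zr * η)).re * (∑ a, (Matrix.trace (Zm y a)).re) / p y
          = al * ((∑ a, (Matrix.trace (Zm y a)).re) / p y) * (Matrix.trace (Zr * η)).re := by ring
      rw [e1]
      have hcoef : 0 ≤ al * ((∑ a, (Matrix.trace (Zm y a)).re) / p y) :=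
        mul_nonneg hal_pos.le (div_nonneg (hSy_nn y) (hppos y).le)
      calc al * ((∑ a, (Matrix.trace (Zm y a)).re) / p y) * (Matrix.trace (Zr * η)).re
          ≤ al * ((∑ a, (Matrix.trace (Zm y a)).re) / p y) * opN :=
            mul_le_mul_of_nonneg_left hc1 hcoef
        _ ≤ 1 := hkey y
  -- application lemmas
  have happ_lt : ∀ (y : Fin κ) (b : Fin (l+J)) (h : (b:ℕ) < l) (η : Mat d),
      discPsi Zr Zm p J χ y b η
        = (((al / p y : ℝ) : ℂ) * Matrix.trace (Zr * η)) • Zm y ⟨b, h⟩ := by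
    intro y b h η
    simp [discPsi, dif_pos h, funMap, smul_smul, ← hal]
  have happ_ge : ∀ (y : Fin κ) (b : Fin (l+J)) (h : ¬ (b:ℕ) < l) (η : Mat d),
      discPsi Zr Zm p J χ y b η
        = ((J:ℂ)⁻¹ * (Matrix.trace η
            - ((al * (∑ a, (Matrix.trace (Zm y a)).re) / p y : ℝ) : ℂ)
              * Matrix.trace (Zr * η))) • χ := by
    intro y b h η
    simp only [discPsi, dif_neg h, funMap, smul_smul, sub_smul, mul_sub, smul_sub,
      Matrix.one_mul, ← hal, LinearMap.smul_apply, LinearMap.sub_apply, LinearMap.coe_mk,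
      AddHom.coe_mk]
    rw [mul_assoc]
  -- subchannels
  have hsub : ∀ y b, IsSubchannel (discPsi Zr Zm p J χ y b) := by
    intro y b
    by_cases h : (b:ℕ) < l
    · constructor
      · intro A hA
        rw [happ_lt y b h A, (Aux.trace_mul_real hZr hA).1, ← Complex.ofReal_mul]
        exact Aux.psd_smul (hZm y ⟨b,h⟩)
          (mul_nonneg (div_nonneg hal_pos.le (hppos y).le) (Aux.trace_mul_real hZr hA).2)
      · intro A hA
        rw [happ_lt y b h A, Matrix.trace_smul, smul_eq_mul,
          (Aux.trace_mul_real hZr hA).1, (Aux.trace_real (hZm y ⟨b,h⟩)).1,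
          ← Complex.ofReal_mul, ← Complex.ofReal_mul, Complex.ofReal_re]
        have hx := hZrtr hA
        have hx0 := (Aux.trace_mul_real hZr hA).2
        have htA := (Aux.trace_real hA).2
        have hm1 : (Matrix.trace (Zm y ⟨b,h⟩)).re ≤ ∑ a, (Matrix.trace (Zm y a)).re :=
          Finset.single_le_sum (fun a _ => hZmtr y a) (Finset.mem_univ _)
        have hm0 := hZmtr y ⟨b,h⟩
        have e1 : al / p y * (Matrix.trace (Zr * A)).re * (Matrix.trace (Zm y ⟨b,h⟩)).re
            ≤ al / p y * (opN * (Matrix.trace A).re) * (Matrix.trace (Zm y ⟨b,h⟩)).re :=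
          mul_le_mul_of_nonneg_right
            (mul_le_mul_of_nonneg_left hx (div_nonneg hal_pos.le (hppos y).le)) hm0
        have e2 : al / p y * (opN * (Matrix.trace A).re) * (Matrix.trace (Zm y ⟨b,h⟩)).re
            ≤ al / p y * (opN * (Matrix.trace A).re) * (∑ a, (Matrix.trace (Zm y a)).re) :=
          mul_le_mul_of_nonneg_left hm1
            (mul_nonneg (div_nonneg hal_pos.le (hppos y).le) (mul_nonneg hopN_pos.le htA))
        have e3 : al / p y * (opN * (Matrix.trace A).re) * (∑ a, (Matrix.trace (Zm y a)).re)
            = (al * ((∑ a, (Matrix.trace (Zm y a)).re) / p y) * opN) * (Matrix.trace A).re := by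
          field_simp
        have e4 := mul_le_mul_of_nonneg_right (hkey y) htA
        rw [one_mul] at e4
        linarith
    · constructor
      · intro A hA
        rw [happ_ge y b h A, (Aux.trace_mul_real hZr hA).1, (Aux.trace_real hA).1]
        have ecast : (J:ℂ)⁻¹ * ((((Matrix.trace A).re : ℝ) : ℂ)
            - ((al * (∑ a, (Matrix.trace (Zm y a)).re) / p y : ℝ) : ℂ)
              * (((Matrix.trace (Zr * A)).re : ℝ) : ℂ))
            = (((J:ℝ)⁻¹ * ((Matrix.trace A).re
              - al * (∑ a, (Matrix.trace (Zm y a)).re) / p y * (Matrix.trace (Zr * A)).re)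
                : ℝ) : ℂ) := by
          push_cast
          ring
        rw [ecast]
        exact Aux.psd_smul hχ.1 (mul_nonneg (by positivity) (hscal hA y))
      · intro A hA
        rw [happ_ge y b h A, Matrix.trace_smul, smul_eq_mul, hχ.2, mul_one,
          (Aux.trace_mul_real hZr hA).1, (Aux.trace_real hA).1]
        have ecast : (J:ℂ)⁻¹ * ((((Matrix.trace A).re : ℝ) : ℂ)
            - ((al * (∑ a, (Matrix.trace (Zm y a)).re) / p y : ℝ) : ℂ)
              * (((Matrix.trace (Zr * A)).re : ℝ) : ℂ))
            = (((J:ℝ)⁻¹ * ((Matrix.trace A).re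
              - al * (∑ a, (Matrix.trace (Zm y a)).re) / p y * (Matrix.trace (Zr * A)).re)
                : ℝ) : ℂ) := by
          push_cast
          ring
        rw [ecast, Complex.ofReal_re, Complex.ofReal_re]
        have h1 := hscal hA y
        have h2 : ((J:ℝ))⁻¹ ≤ 1 := by
          rw [inv_le_one_iff₀]
          right
          exact_mod_cast hJ
        have h3 : 0 ≤ (Matrix.trace A).re := (Aux.trace_real hA).2
        have h4 : 0 ≤ al * (∑ a, (Matrix.trace (Zm y a)).re) / p y
            * (Matrix.trace (Zr * A)).re :=
          mul_nonneg (div_nonneg (mul_nonneg hal_pos.le (hSy_nn y)) (hppos y).le)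
            (Aux.trace_mul_real hZr hA).2
        have hJ0 : (0:ℝ) < (J:ℝ)⁻¹ := by positivity
        nlinarith
  -- trace preservation
  have htp : ∀ y (A : Mat d),
      Matrix.trace (∑ b, discPsi Zr Zm p J χ y b A) = Matrix.trace A := by
    intro y A
    rw [Matrix.trace_sum]
    rw [Fin.sum_univ_add (f := fun b => Matrix.trace (discPsi Zr Zm p J χ y b A))]
    have hZmsum : ∑ i : Fin l, Matrix.trace (Zm y i)
        = (((∑ a, (Matrix.trace (Zm y a)).re : ℝ)) : ℂ) := by
      rw [Complex.ofReal_sum]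
      exact Finset.sum_congr rfl fun i _ => (Aux.trace_real (hZm y i)).1
    have hterm1 : ∀ i : Fin l,
        Matrix.trace (discPsi Zr Zm p J χ y (Fin.castAdd J i) A)
          = ((al / p y : ℝ) : ℂ) * Matrix.trace (Zr * A) * Matrix.trace (Zm y i) := by
      intro i
      have hi : ((Fin.castAdd J i : Fin (l+J)) : ℕ) < l := by
        simp [Fin.coe_castAdd, i.isLt]
      rw [happ_lt y _ hi A, Matrix.trace_smul, smul_eq_mul]
      congr 2
    have hterm2 : ∀ j : Fin J,
        Matrix.trace (discPsi Zr Zm p J χ y (Fin.natAdd l j) A)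
          = (J:ℂ)⁻¹ * (Matrix.trace A
              - ((al * (∑ a, (Matrix.trace (Zm y a)).re) / p y : ℝ) : ℂ)
                * Matrix.trace (Zr * A)) := by
      intro j
      have hj : ¬ ((Fin.natAdd l j : Fin (l+J)) : ℕ) < l := by
        simp [Fin.coe_natAdd]
      rw [happ_ge y _ hj A, Matrix.trace_smul, smul_eq_mul, hχ.2, mul_one]
    rw [Finset.sum_congr rfl (fun i _ => hterm1 i),
      Finset.sum_congr rfl (fun j _ => hterm2 j)]
    rw [← Finset.sum_mul, ← Finset.mul_sum, hZmsum, Finset.sum_const, Finset.card_univ,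
      Fintype.card_fin, nsmul_eq_mul]
    have hJne : (J:ℂ) ≠ 0 := Nat.cast_ne_zero.mpr (by omega)
    rw [mul_inv_cancel₀ hJne, one_mul]
    push_cast
    ring
    
  refine ⟨⟨hFy, hsub, fun y => ⟨hsub y, htp y⟩, hp, hppos, fun y => ⟨hsub y, htp y⟩⟩, ?_⟩
  -- Part (ii)
  have hJinn : (0:ℝ) ≤ (J:ℝ)⁻¹ := by positivity
  have hbnn : (0:ℝ) ≤ al + 1 / (J:ℝ) := by positivity
  refine Real.sSup_le ?_ hbnn
  rintro v ⟨σ, N, hσ, hN, rfl⟩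
  refine Real.sSup_le ?_ hbnn
  rintro v ⟨N', hsim, rfl⟩
  have hσpsd : σ.PosSemidef := h𝓕.1 σ hσ.1
  have hσst : IsState σ := ⟨hσpsd, hσ.2⟩
  set c0 := (Matrix.trace (Zr * σ)).re with hc0
  have hc0nn : 0 ≤ c0 := (Aux.trace_mul_real hZr hσpsd).2
  have hc0le : c0 ≤ 1 := hZrF σ hσ
  have hc0C : Matrix.trace (Zr * σ) = ((c0 : ℝ) : ℂ) := (Aux.trace_mul_real hZr hσpsd).1
  have hNpov : IsPOVMSet N := (h𝔽 l κ).1 N hN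
  obtain ⟨nz, q, r, s, hq, hr, hs, hrep⟩ := hsim
  have hcoefnn : ∀ y z x a b, 0 ≤ q z * r y z x * s y z a b := fun y z x a b =>
    mul_nonneg (mul_nonneg (hq.1 z) ((hr y z).1 x)) ((hs y z a).1 b)
  have hN'psd : ∀ y b, (N' y b).PosSemidef := by
    intro y b
    rw [hrep y b]
    refine psd_sum _ _ fun z _ => psd_sum _ _ fun x _ => psd_sum _ _ fun a _ => ?_
    exact Aux.psd_real_smul (hNpov.1 x a) (hcoefnn y z x a b)
  have hN'sum : ∀ y, ∑ b, N' y b = (1 : Mat d) := by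
    intro y
    calc ∑ b, N' y b
        = ∑ b, ∑ z, ∑ x, ∑ a, (q z * r y z x * s y z a b) • N x a :=
          Finset.sum_congr rfl fun b _ => hrep y b
      _ = ∑ z, ∑ x, ∑ a, ∑ b, (q z * r y z x * s y z a b) • N x a := by
          rw [Finset.sum_comm]
          refine Finset.sum_congr rfl fun z _ => ?_
          rw [Finset.sum_comm]
          exact Finset.sum_congr rfl fun x _ => Finset.sum_comm ..
      _ = ∑ z, ∑ x, ∑ a, (q z * r y z x) • N x a := by
          refine Finset.sum_congr rfl fun z _ => Finset.sum_congr rfl fun x _ =>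
            Finset.sum_congr rfl fun a _ => ?_
          rw [← Finset.sum_smul]
          congr 1
          rw [← Finset.mul_sum, (hs y z a).2, mul_one]
      _ = ∑ z, ∑ x, (q z * r y z x) • (1 : Mat d) := by
          refine Finset.sum_congr rfl fun z _ => Finset.sum_congr rfl fun x _ => ?_
          rw [← Finset.smul_sum, hNpov.2 x]
      _ = (1 : Mat d) := by
          have h1 : ∀ z, ∑ x, (q z * r y z x) • (1:Mat d) = q z • (1:Mat d) := fun z => by
            rw [← Finset.sum_smul, ← Finset.mul_sum, (hr y z).2, mul_one]
          rw [Finset.sum_congr rfl fun z _ => h1 z, ← Finset.sum_smul, hq.2, one_smul]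
  -- merge map
  set f : Fin (l+J) → Fin l := fun b => if h : (b:ℕ) < l then ⟨b, h⟩ else ⟨l-1, by omega⟩
    with hfdef
  set N'' : Fin κ → Fin l → Mat d :=
    fun y a => ∑ b ∈ Finset.univ.filter (fun b => f b = a), N' y b with hN''def
  have hsim'' : Simulable N'' N := by
    refine ⟨nz, q, r,
      fun y z a a' => ∑ b ∈ Finset.univ.filter (fun b => f b = a'), s y z a b,
      hq, hr, ?_, ?_⟩
    · intro y z a
      refine ⟨fun a' => Finset.sum_nonneg fun b _ => (hs y z a).1 b, ?_⟩
      rw [Finset.sum_fiberwise_of_maps_to (fun b _ => Finset.mem_univ (f b))]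
      exact (hs y z a).2
    · intro y a'
      calc N'' y a'
          = ∑ b ∈ Finset.univ.filter (fun b => f b = a'),
              ∑ z, ∑ x, ∑ a, (q z * r y z x * s y z a b) • N x a :=
            Finset.sum_congr rfl fun b _ => hrep y b
        _ = ∑ z, ∑ x, ∑ a, ∑ b ∈ Finset.univ.filter (fun b => f b = a'),
              (q z * r y z x * s y z a b) • N x a := by
            rw [Finset.sum_comm]
            refine Finset.sum_congr rfl fun z _ => ?_
            rw [Finset.sum_comm]
            exact Finset.sum_congr rfl fun x _ => Finset.sum_comm ..
        _ = ∑ z, ∑ x, ∑ a,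
              (q z * r y z x * ∑ b ∈ Finset.univ.filter (fun b => f b = a'), s y z a b)
                • N x a := by
            refine Finset.sum_congr rfl fun z _ => Finset.sum_congr rfl fun x _ =>
              Finset.sum_congr rfl fun a _ => ?_
            rw [← Finset.sum_smul]
            congr 1
            rw [← Finset.mul_sum]
  have hN''mem : N'' ∈ 𝔽 l κ := h𝔽sim N N'' hN hsim''
  have hW1 : ∑ x, ∑ a, (Matrix.trace (Zm x a * N'' x a)).re ≤ 1 := hZmF N'' hN''mem
  have hWeq : ∀ y, ∑ a', (Matrix.trace (Zm y a' * N'' y a')).re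
      = ∑ b, (Matrix.trace (Zm y (f b) * N' y b)).re := by
    intro y
    have h1 : ∀ a', (Matrix.trace (Zm y a' * N'' y a')).re
        = ∑ b ∈ Finset.univ.filter (fun b => f b = a'),
            (Matrix.trace (Zm y a' * N' y b)).re := by
      intro a'
      rw [hN''def]
      rw [Finset.mul_sum, Matrix.trace_sum, Complex.re_sum]
    rw [Finset.sum_congr rfl fun a' _ => h1 a']
    have h2 : ∀ a', ∑ b ∈ Finset.univ.filter (fun b => f b = a'),
        (Matrix.trace (Zm y a' * N' y b)).re
        = ∑ b ∈ Finset.univ.filter (fun b => f b = a'),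
            (Matrix.trace (Zm y (f b) * N' y b)).re := by
      intro a'
      refine Finset.sum_congr rfl fun b hb => ?_
      rw [(Finset.mem_filter.mp hb).2]
    rw [Finset.sum_congr rfl fun a' _ => h2 a',
      Finset.sum_fiberwise_of_maps_to (fun b _ => Finset.mem_univ (f b))]
  have hwnn : ∀ y b, 0 ≤ (Matrix.trace (Zm y (f b) * N' y b)).re := fun y b =>
    (Aux.trace_mul_real (hZm y _) (hN'psd y b)).2
  set W := ∑ y, ∑ b, (Matrix.trace (Zm y (f b) * N' y b)).re with hWdef
  have hWle : W ≤ 1 := by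
    rw [hWdef]
    calc ∑ y, ∑ b, (Matrix.trace (Zm y (f b) * N' y b)).re
        = ∑ y, ∑ a', (Matrix.trace (Zm y a' * N'' y a')).re :=
          Finset.sum_congr rfl fun y _ => (hWeq y).symm
      _ ≤ 1 := hW1
  have hWnn : 0 ≤ W :=
    Finset.sum_nonneg fun y _ => Finset.sum_nonneg fun b _ => hwnn y b
  have hunn : ∀ y b, 0 ≤ (Matrix.trace (N' y b * χ)).re := fun y b =>
    (Aux.trace_mul_real (hN'psd y b) hχ.1).2
  have husum : ∀ y, ∑ b, (Matrix.trace (N' y b * χ)).re = 1 := by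
    intro y
    have h1 : ∑ b, Matrix.trace (N' y b * χ) = Matrix.trace ((∑ b, N' y b) * χ) := by
      rw [Finset.sum_mul, Matrix.trace_sum]
    rw [← Complex.re_sum, h1, hN'sum y, Matrix.one_mul, hχ.2]
    simp
  -- termwise bound
  have hterm : ∀ y b, p y * (Matrix.trace (N' y b * discPsi Zr Zm p J χ y b σ)).re
      ≤ al * c0 * (Matrix.trace (Zm y (f b) * N' y b)).re
        + p y * (J:ℝ)⁻¹ * (Matrix.trace (N' y b * χ)).re := by
    intro y b
    by_cases h : (b:ℕ) < l
    · have hfb : f b = ⟨b, h⟩ := dif_pos h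
      rw [happ_lt y b h σ, Matrix.mul_smul, Matrix.trace_smul, smul_eq_mul, hc0C,
        ← Complex.ofReal_mul,
        (Aux.trace_mul_real (hN'psd y b) (hZm y ⟨b, h⟩)).1, ← Complex.ofReal_mul,
        Complex.ofReal_re]
      have hw' : (Matrix.trace (N' y b * Zm y ⟨b, h⟩)).re
          = (Matrix.trace (Zm y (f b) * N' y b)).re := by
        rw [hfb, Matrix.trace_mul_comm]
      rw [hw']
      have he : p y * (al / p y * c0 * (Matrix.trace (Zm y (f b) * N' y b)).re)
          = al * c0 * (Matrix.trace (Zm y (f b) * N' y b)).re := by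
        field_simp
        rw [mul_assoc]
        exact mul_div_cancel_left₀ _ (hppos y).ne'
      rw [he]
      have h2 : 0 ≤ p y * (J:ℝ)⁻¹ * (Matrix.trace (N' y b * χ)).re :=
        mul_nonneg (mul_nonneg (hppos y).le hJinn) (hunn y b)
      linarith
    · rw [happ_ge y b h σ, hσ.2, Matrix.mul_smul, Matrix.trace_smul, smul_eq_mul, hc0C]
      have ecast : (J:ℂ)⁻¹ * (1 - ((al * (∑ a, (Matrix.trace (Zm y a)).re) / p y : ℝ) : ℂ)
            * ((c0 : ℝ) : ℂ))
          = (((J:ℝ)⁻¹ * (1 - al * (∑ a, (Matrix.trace (Zm y a)).re) / p y * c0) : ℝ) : ℂ) := by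
        push_cast
        ring
      rw [ecast, (Aux.trace_mul_real (hN'psd y b) hχ.1).1, ← Complex.ofReal_mul]
      simp only [Complex.ofReal_re]
      set u := (Matrix.trace (N' y b * χ)).re with hu
      set k := al * (∑ a, (Matrix.trace (Zm y a)).re) / p y with hk
      have hknn : 0 ≤ k * c0 := mul_nonneg
        (div_nonneg (mul_nonneg hal_pos.le (hSy_nn y)) (hppos y).le) hc0nn
      have hwnn' : 0 ≤ al * c0 * (Matrix.trace (Zm y (f b) * N' y b)).re :=
        mul_nonneg (mul_nonneg hal_pos.le hc0nn) (hwnn y b)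
      have hunn' : 0 ≤ u := hunn y b
      have hpy := hppos y
      nlinarith [mul_nonneg (mul_nonneg (mul_nonneg hpy.le hJinn) hknn) hunn']
  -- final assembly
  have hgv : gameValue p (discPsi Zr Zm p J χ) σ N'
      = ∑ y, ∑ b, p y * (Matrix.trace (N' y b * discPsi Zr Zm p J χ y b σ)).re := rfl
  rw [hgv]
  have hstep1 : ∑ y, ∑ b, p y * (Matrix.trace (N' y b * discPsi Zr Zm p J χ y b σ)).re
      ≤ ∑ y, ∑ b, (al * c0 * (Matrix.trace (Zm y (f b) * N' y b)).re
          + p y * (J:ℝ)⁻¹ * (Matrix.trace (N' y b * χ)).re) :=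
    Finset.sum_le_sum fun y _ => Finset.sum_le_sum fun b _ => hterm y b
  have hstep2 : ∑ y, ∑ b, (al * c0 * (Matrix.trace (Zm y (f b) * N' y b)).re
        + p y * (J:ℝ)⁻¹ * (Matrix.trace (N' y b * χ)).re)
      = al * c0 * W + (J:ℝ)⁻¹ := by
    have h3 : ∀ y, ∑ b, (al * c0 * (Matrix.trace (Zm y (f b) * N' y b)).re
          + p y * (J:ℝ)⁻¹ * (Matrix.trace (N' y b * χ)).re)
        = al * c0 * (∑ b, (Matrix.trace (Zm y (f b) * N' y b)).re) + p y * (J:ℝ)⁻¹ := by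
      intro y
      rw [Finset.sum_add_distrib, ← Finset.mul_sum, ← Finset.mul_sum, husum y, mul_one]
    rw [Finset.sum_congr rfl fun y _ => h3 y, Finset.sum_add_distrib, ← Finset.mul_sum,
      ← Finset.sum_mul, hp.2, one_mul, ← hWdef]
  have hfin : al * c0 * W + (J:ℝ)⁻¹ ≤ al + 1 / (J:ℝ) := by
    rw [one_div]
    have h1 : al * c0 * W ≤ al := by
      calc al * c0 * W = al * (c0 * W) := by ring
        _ ≤ al * 1 := mul_le_mul_of_nonneg_left
            (by nlinarith [mul_le_mul hc0le hWle hWnn zero_le_one]) hal_pos.le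
        _ = al := mul_one al
    linarith
  calc ∑ y, ∑ b, p y * (Matrix.trace (N' y b * discPsi Zr Zm p J χ y b σ)).re
      ≤ al * c0 * W + (J:ℝ)⁻¹ := hstep2 ▸ hstep1
    _ ≤ al + 1 / (J:ℝ) := hfin



end MultiObject
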